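/- Every rule of G3C is derivable in SC∞: for each axiom and rule of the sequent calculus G3C, if all premise sequents (read as R-expressions of degree 1) are derivable in SC∞, then the conclusion sequent is derivable in SC∞. Consequently, every sequent Γ ⇒ A derivable in G3C is derivable in SC∞. -/

import Mathlib

/-- Formulas of the connexive logic C: propositional variables, strong
negation `∼`, conjunction, disjunction and implication. -/
inductive Formula : Type
  | var : Nat → Formula
  | snot : Formula → Formula
  | and : Formula → Formula → Formula
  | or : Formula → Formula → Formula
  | imp : Formula → Formula → Formula
deriving DecidableEq

/-- R-expressions over the language of C.  `fm A` is the formula `A`,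
`negFm A` is `−A`, `seq Δ S` is `(Δ ⇒ S)` and `negSeq Δ S` is `−(Δ ⇒ S)`.
The convention `−−S = S` is implemented by the involution `rneg`. -/
inductive RExpr : Type
  | fm : Formula → RExpr
  | negFm : Formula → RExpr
  | seq : List RExpr → RExpr → RExpr
  | negSeq : List RExpr → RExpr → RExpr

/-- The refutation `−S` of an R-expression, with `−−S = S`. -/
def rneg : RExpr → RExpr
  | .fm A => .negFm A
  | .negFm A => .fm A
  | .seq Δ S => .negSeq Δ S
  | .negSeq Δ S => .seq Δ S

/-- Derivability in the higher-order sequent calculus `SC∞` from a set `P`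
of R-expressions taken as additional premises. -/
inductive SC (P : Set RExpr) : RExpr → Prop
  | prem {S} : S ∈ P → SC P S
  | rf (S) : SC P (.seq [S] S)
  | wl {Δ S} (T) : SC P (.seq Δ S) → SC P (.seq (Δ ++ [T]) S)
  | pl {U} (Δ S T Γ) : SC P (.seq (Δ ++ S :: T :: Γ) U) → SC P (.seq (Δ ++ T :: S :: Γ) U)
  | cl {Δ S T} : SC P (.seq (Δ ++ [S, S]) T) → SC P (.seq (Δ ++ [S]) T)
  | cut {Δ S T} : SC P (.seq Δ S) → SC P (.seq (Δ ++ [S]) T) → SC P (.seq Δ T)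
  | riP {Γ Δ S} : SC P (.seq (Γ ++ Δ) S) → SC P (.seq Γ (.seq Δ S))
  | liP {Γ Δ S T} : (∀ U ∈ Δ, SC P (.seq Γ U)) → SC P (.seq (Γ ++ [S]) T) →
      SC P (.seq (Γ ++ [.seq Δ S]) T)
  | riN {Δ Γ S} : SC P (.seq (Δ ++ Γ) (rneg S)) → SC P (.seq Δ (rneg (.seq Γ S)))
  | riN' {Δ Γ S} : SC P (.seq Δ (rneg (.seq Γ S))) → SC P (.seq (Δ ++ Γ) (rneg S))
  | liN {Δ Γ S T} : (∀ U ∈ Γ, SC P (.seq Δ U)) → SC P (.seq (Δ ++ [rneg S]) T) →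
      SC P (.seq (Δ ++ [rneg (.seq Γ S)]) T)
  | snotL {Δ A S} : SC P (.seq (Δ ++ [.negFm A]) S) → SC P (.seq (Δ ++ [.fm (.snot A)]) S)
  | snotR {Δ A} : SC P (.seq Δ (.negFm A)) → SC P (.seq Δ (.fm (.snot A)))
  | snotLm {Δ A S} : SC P (.seq (Δ ++ [.fm A]) S) → SC P (.seq (Δ ++ [.negFm (.snot A)]) S)
  | snotRm {Δ A} : SC P (.seq Δ (.fm A)) → SC P (.seq Δ (.negFm (.snot A)))
  | andL {Δ A B S} : SC P (.seq (Δ ++ [.fm A, .fm B]) S) → SC P (.seq (Δ ++ [.fm (.and A B)]) S)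
  | andR {Δ A B} : SC P (.seq Δ (.fm A)) → SC P (.seq Δ (.fm B)) → SC P (.seq Δ (.fm (.and A B)))
  | andLm {Δ A B S} : SC P (.seq (Δ ++ [.negFm A]) S) → SC P (.seq (Δ ++ [.negFm B]) S) →
      SC P (.seq (Δ ++ [.negFm (.and A B)]) S)
  | andRm₁ {Δ A B} : SC P (.seq Δ (.negFm A)) → SC P (.seq Δ (.negFm (.and A B)))
  | andRm₂ {Δ A B} : SC P (.seq Δ (.negFm B)) → SC P (.seq Δ (.negFm (.and A B)))
  | orL {Δ A B S} : SC P (.seq (Δ ++ [.fm A]) S) → SC P (.seq (Δ ++ [.fm B]) S) →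
      SC P (.seq (Δ ++ [.fm (.or A B)]) S)
  | orR₁ {Δ A B} : SC P (.seq Δ (.fm A)) → SC P (.seq Δ (.fm (.or A B)))
  | orR₂ {Δ A B} : SC P (.seq Δ (.fm B)) → SC P (.seq Δ (.fm (.or A B)))
  | orLm {Δ A B S} : SC P (.seq (Δ ++ [.negFm A, .negFm B]) S) →
      SC P (.seq (Δ ++ [.negFm (.or A B)]) S)
  | orRm {Δ A B} : SC P (.seq Δ (.negFm A)) → SC P (.seq Δ (.negFm B)) →
      SC P (.seq Δ (.negFm (.or A B)))
  | impL {Δ A B S} : SC P (.seq (Δ ++ [.seq [.fm A] (.fm B)]) S) →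
      SC P (.seq (Δ ++ [.fm (.imp A B)]) S)
  | impR {Δ A B} : SC P (.seq Δ (.seq [.fm A] (.fm B))) → SC P (.seq Δ (.fm (.imp A B)))
  | impLm {Δ A B S} : SC P (.seq (Δ ++ [.negSeq [.fm A] (.fm B)]) S) →
      SC P (.seq (Δ ++ [.negFm (.imp A B)]) S)
  | impRm {Δ A B} : SC P (.seq Δ (.negSeq [.fm A] (.fm B))) → SC P (.seq Δ (.negFm (.imp A B)))

/-- `S ⇔ˢ T` relative to the premise set `P`: the four R-expressions
`S ⇒ T`, `T ⇒ S`, `−S ⇒ −T`, `−T ⇒ −S` are each derivable from `P`. -/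
def StrictEquiv (P : Set RExpr) (S T : RExpr) : Prop :=
  SC P (.seq [S] T) ∧ SC P (.seq [T] S) ∧
  SC P (.seq [rneg S] (rneg T)) ∧ SC P (.seq [rneg T] (rneg S))

/-- The four R-expressions constituting `S ⇔ˢ T`, taken as premises. -/
def equivPrems (S T : RExpr) : Set RExpr :=
  {RExpr.seq [S] T, RExpr.seq [T] S, RExpr.seq [rneg S] (rneg T), RExpr.seq [rneg T] (rneg S)}
/-- Derivability of sequents `Γ ⇒ A` (with `Γ` a finite multiset of formulas)
in the sequent calculus `G3C` for the connexive logic `C`. -/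
inductive Gder : Multiset Formula → Formula → Prop
  | ax {Γ n} : Gder (.var n ::ₘ Γ) (.var n)
  | axSnot {Γ n} : Gder (.snot (.var n) ::ₘ Γ) (.snot (.var n))
  | andR {Γ A B} : Gder Γ A → Gder Γ B → Gder Γ (.and A B)
  | andL {Γ A B C} : Gder (A ::ₘ B ::ₘ Γ) C → Gder (.and A B ::ₘ Γ) C
  | orR₁ {Γ A B} : Gder Γ A → Gder Γ (.or A B)
  | orR₂ {Γ A B} : Gder Γ B → Gder Γ (.or A B)
  | orL {Γ A B C} : Gder (A ::ₘ Γ) C → Gder (B ::ₘ Γ) C → Gder (.or A B ::ₘ Γ) C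
  | impR {Γ A B} : Gder (A ::ₘ Γ) B → Gder Γ (.imp A B)
  | impL {Γ A B C} : Gder (.imp A B ::ₘ Γ) A → Gder (B ::ₘ Γ) C → Gder (.imp A B ::ₘ Γ) C
  | snotSnotR {Γ A} : Gder Γ A → Gder Γ (.snot (.snot A))
  | snotSnotL {Γ A C} : Gder (A ::ₘ Γ) C → Gder (.snot (.snot A) ::ₘ Γ) C
  | snotAndR₁ {Γ A B} : Gder Γ (.snot A) → Gder Γ (.snot (.and A B))
  | snotAndR₂ {Γ A B} : Gder Γ (.snot B) → Gder Γ (.snot (.and A B))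
  | snotAndL {Γ A B C} : Gder (.snot A ::ₘ Γ) C → Gder (.snot B ::ₘ Γ) C →
      Gder (.snot (.and A B) ::ₘ Γ) C
  | snotOrR {Γ A B} : Gder Γ (.snot A) → Gder Γ (.snot B) → Gder Γ (.snot (.or A B))
  | snotOrL {Γ A B C} : Gder (.snot A ::ₘ .snot B ::ₘ Γ) C → Gder (.snot (.or A B) ::ₘ Γ) C
  | snotImpR {Γ A B} : Gder (A ::ₘ Γ) (.snot B) → Gder Γ (.snot (.imp A B))
  | snotImpL {Γ A B C} : Gder (.snot (.imp A B) ::ₘ Γ) A → Gder (.snot B ::ₘ Γ) C →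
      Gder (.snot (.imp A B) ::ₘ Γ) C
/-- The antecedent of a `G3C` sequent read as a list of degree-0 R-expressions. -/
def ctx (Γ : List Formula) : List RExpr := Γ.map .fm

section SCHelpers

variable {P : Set RExpr}

lemma SC.weakApp {Δ : List RExpr} {S : RExpr} (Γ : List RExpr)
    (h : SC P (.seq Δ S)) : SC P (.seq (Δ ++ Γ) S) := by
  induction Γ using List.reverseRecOn with
  | nil => simpa using h
  | append_singleton Γ T ih => rw [← List.append_assoc]; exact SC.wl T ih

lemma SC.permAux {S : RExpr} {l l' : List RExpr} (h : l.Perm l') :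
    ∀ Δ₀ : List RExpr, SC P (.seq (Δ₀ ++ l) S) → SC P (.seq (Δ₀ ++ l') S) := by
  induction h with
  | nil => exact fun _ => id
  | cons a h ih =>
      intro Δ₀ hd
      have := ih (Δ₀ ++ [a]) (by simpa using hd)
      simpa using this
  | swap x y l =>
      intro Δ₀ hd
      exact SC.pl Δ₀ y x l hd
  | trans h1 h2 ih1 ih2 =>
      intro Δ₀ hd
      exact ih2 Δ₀ (ih1 Δ₀ hd)

lemma SC.perm {S : RExpr} {Δ Δ' : List RExpr} (h : Δ.Perm Δ')
    (hd : SC P (.seq Δ S)) : SC P (.seq Δ' S) :=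
  SC.permAux h [] hd

lemma SC.idCtx (Δ : List RExpr) (S : RExpr) : SC P (.seq (Δ ++ [S]) S) :=
  SC.perm List.perm_append_comm (SC.weakApp Δ (SC.rf S))

/-- insert a formula anywhere on the left -/
lemma SC.insertMid {Δ Γ : List RExpr} {S : RExpr} (T : RExpr)
    (h : SC P (.seq (Δ ++ Γ) S)) : SC P (.seq (Δ ++ T :: Γ) S) := by
  have h1 := SC.weakApp [T] h
  refine SC.perm ?_ h1
  rw [List.append_assoc]
  exact (List.perm_append_comm (l₁ := Γ) (l₂ := [T])).append_left Δ

/-- from `Δ ⇒ ∼A` infer `Δ ⇒ −A` -/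
lemma SC.toNeg {Δ : List RExpr} {A : Formula}
    (h : SC P (.seq Δ (.fm (.snot A)))) : SC P (.seq Δ (.negFm A)) :=
  SC.cut h (SC.snotL (SC.idCtx Δ (.negFm A)))

/-- from `Δ, ∼A ⇒ S` infer `Δ, −A ⇒ S` -/
lemma SC.leftSnotToNeg {Δ : List RExpr} {A : Formula} {S : RExpr}
    (h : SC P (.seq (Δ ++ [.fm (.snot A)]) S)) :
    SC P (.seq (Δ ++ [.negFm A]) S) := by
  refine SC.cut (SC.snotR (SC.idCtx Δ (.negFm A))) ?_
  have := SC.insertMid (Δ := Δ) (Γ := [.fm (.snot A)]) (.negFm A) h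
  simpa using this

/-- derivation of G3C's L→ rule -/
lemma SC.impLeft {Δ : List RExpr} {A B : Formula} {S : RExpr}
    (h1 : SC P (.seq (Δ ++ [.fm (.imp A B)]) (.fm A)))
    (h2 : SC P (.seq (Δ ++ [.fm B]) S)) :
    SC P (.seq (Δ ++ [.fm (.imp A B)]) S) := by
  have h2' : SC P (.seq ((Δ ++ [.fm (.imp A B)]) ++ [.fm B]) S) := by
    simpa using SC.insertMid (Δ := Δ) (Γ := [.fm B]) (.fm (.imp A B)) h2
  have h3 := SC.liP (Γ := Δ ++ [.fm (.imp A B)]) (Δ := [.fm A]) (S := .fm B) (T := S)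
      (by intro U hU; simp at hU; subst hU; exact h1) h2'
  have h4 := SC.impL (Δ := Δ ++ [.fm (.imp A B)]) (A := A) (B := B) h3
  exact SC.cl (Δ := Δ) (by simpa using h4)

/-- derivation of G3C's L∼→ rule -/
lemma SC.snotImpLeft {Δ : List RExpr} {A B : Formula} {S : RExpr}
    (h1 : SC P (.seq (Δ ++ [.fm (.snot (.imp A B))]) (.fm A)))
    (h2 : SC P (.seq (Δ ++ [.fm (.snot B)]) S)) :
    SC P (.seq (Δ ++ [.fm (.snot (.imp A B))]) S) := by
  have h2a : SC P (.seq (Δ ++ [.negFm B]) S) := SC.leftSnotToNeg h2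
  have h2' : SC P (.seq ((Δ ++ [.fm (.snot (.imp A B))]) ++ [.negFm B]) S) := by
    simpa using SC.insertMid (Δ := Δ) (Γ := [.negFm B]) (.fm (.snot (.imp A B))) h2a
  have h3 := SC.liN (Δ := Δ ++ [.fm (.snot (.imp A B))]) (Γ := [.fm A]) (S := .fm B) (T := S)
      (by intro U hU; simp at hU; subst hU; exact h1) h2'
  -- h3 : (Δ ++ [∼(A→B)]) ++ [−(A ⇒ B)] ⇒ S
  have h4 := SC.impLm (Δ := Δ ++ [.fm (.snot (.imp A B))]) (A := A) (B := B) h3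
  -- h4 : (Δ ++ [∼(A→B)]) ++ [−(A→B)] ⇒ S
  have h5 := SC.snotL (Δ := Δ ++ [.fm (.snot (.imp A B))]) (A := .imp A B) h4
  exact SC.cl (Δ := Δ) (by simpa using h5)

end SCHelpers

section Rules

variable {P : Set RExpr} {Δ : List RExpr} {A B : Formula} {S : RExpr}

lemma SC.ruleImpR (h : SC P (.seq (Δ ++ [.fm A]) (.fm B))) :
    SC P (.seq Δ (.fm (.imp A B))) :=
  SC.impR (SC.riP h)

lemma SC.ruleSnotSnotR (h : SC P (.seq Δ (.fm A))) :
    SC P (.seq Δ (.fm (.snot (.snot A)))) :=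
  SC.snotR (SC.snotRm h)

lemma SC.ruleSnotSnotL (h : SC P (.seq (Δ ++ [.fm A]) S)) :
    SC P (.seq (Δ ++ [.fm (.snot (.snot A))]) S) :=
  SC.snotL (SC.snotLm h)

lemma SC.ruleSnotAndR1 (h : SC P (.seq Δ (.fm (.snot A)))) :
    SC P (.seq Δ (.fm (.snot (.and A B)))) :=
  SC.snotR (SC.andRm₁ (SC.toNeg h))

lemma SC.ruleSnotAndR2 (h : SC P (.seq Δ (.fm (.snot B)))) :
    SC P (.seq Δ (.fm (.snot (.and A B)))) :=
  SC.snotR (SC.andRm₂ (SC.toNeg h))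

lemma SC.ruleSnotAndL (h1 : SC P (.seq (Δ ++ [.fm (.snot A)]) S))
    (h2 : SC P (.seq (Δ ++ [.fm (.snot B)]) S)) :
    SC P (.seq (Δ ++ [.fm (.snot (.and A B))]) S) :=
  SC.snotL (SC.andLm (SC.leftSnotToNeg h1) (SC.leftSnotToNeg h2))

lemma SC.ruleSnotOrR (h1 : SC P (.seq Δ (.fm (.snot A))))
    (h2 : SC P (.seq Δ (.fm (.snot B)))) :
    SC P (.seq Δ (.fm (.snot (.or A B)))) :=
  SC.snotR (SC.orRm (SC.toNeg h1) (SC.toNeg h2))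

lemma SC.ruleSnotOrL (h : SC P (.seq (Δ ++ [.fm (.snot A), .fm (.snot B)]) S)) :
    SC P (.seq (Δ ++ [.fm (.snot (.or A B))]) S) := by
  have h2 : SC P (.seq ((Δ ++ [.fm (.snot A)]) ++ [.negFm B]) S) :=
    SC.leftSnotToNeg (by simpa using h)
  have h3 : SC P (.seq (Δ ++ [.negFm B, .fm (.snot A)]) S) :=
    SC.pl Δ (.fm (.snot A)) (.negFm B) [] (by simpa using h2)
  have h4 : SC P (.seq ((Δ ++ [.negFm B]) ++ [.negFm A]) S) :=
    SC.leftSnotToNeg (by simpa using h3)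
  have h5 : SC P (.seq (Δ ++ [.negFm A, .negFm B]) S) :=
    SC.pl Δ (.negFm B) (.negFm A) [] (by simpa using h4)
  exact SC.snotL (SC.orLm h5)

lemma SC.ruleSnotImpR (h : SC P (.seq (Δ ++ [.fm A]) (.fm (.snot B)))) :
    SC P (.seq Δ (.fm (.snot (.imp A B)))) :=
  SC.snotR (SC.impRm (SC.riN (Γ := [.fm A]) (S := .fm B) (SC.toNeg h)))

end Rules

@[simp] lemma ctx_nil : ctx [] = [] := rfl
@[simp] lemma ctx_cons (a : Formula) (l : List Formula) :
    ctx (a :: l) = .fm a :: ctx l := rfl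
@[simp] lemma ctx_append (l₁ l₂ : List Formula) :
    ctx (l₁ ++ l₂) = ctx l₁ ++ ctx l₂ := List.map_append

lemma Multiset.snocL {α} (L : List α) (Γ : Multiset α) (h : (↑L : Multiset α) = Γ) (a : α) :
    (↑(L ++ [a]) : Multiset α) = a ::ₘ Γ := by
  rw [← Multiset.coe_add, h, add_comm, Multiset.coe_singleton, Multiset.singleton_add]

lemma Multiset.snoc1 {α} (Γ : Multiset α) (a : α) :
    (↑(Γ.toList ++ [a]) : Multiset α) = a ::ₘ Γ :=
  Multiset.snocL _ _ (Multiset.coe_toList Γ) a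

lemma Multiset.snoc2 {α} (Γ : Multiset α) (a b : α) :
    (↑(Γ.toList ++ [a, b]) : Multiset α) = a ::ₘ b ::ₘ Γ := by
  rw [show Γ.toList ++ [a, b] = (Γ.toList ++ [a]) ++ [b] by simp,
    Multiset.snocL _ _ (Multiset.snoc1 Γ a) b, Multiset.cons_swap]

lemma SC.canon {Γm : Multiset Formula} {L : List Formula}
    (hL : (↑L : Multiset Formula) = Γm) {L₀ : List Formula}
    (h₀ : (↑L₀ : Multiset Formula) = Γm) {S : RExpr}
    (hd : SC ∅ (.seq (ctx L₀) S)) : SC ∅ (.seq (ctx L) S) :=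
  SC.perm (List.Perm.map _ (Multiset.coe_eq_coe.mp (h₀.trans hL.symm))) hd

lemma gder_sc {Γm : Multiset Formula} {A : Formula} (h : Gder Γm A) :
    ∀ L : List Formula, (↑L : Multiset Formula) = Γm → SC ∅ (.seq (ctx L) (.fm A)) := by
  induction h with
  | @ax Γ n =>
      intro L hL
      refine SC.canon hL (L₀ := Γ.toList ++ [.var n]) (Multiset.snoc1 Γ _) ?_
      simpa using SC.idCtx (ctx Γ.toList) (.fm (.var n))
  | @axSnot Γ n =>
      intro L hL
      refine SC.canon hL (L₀ := Γ.toList ++ [.snot (.var n)]) (Multiset.snoc1 Γ _) ?_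
      simpa using SC.idCtx (ctx Γ.toList) (.fm (.snot (.var n)))
  | andR _ _ ih1 ih2 => exact fun L hL => SC.andR (ih1 L hL) (ih2 L hL)
  | @andL Γ A B C _ ih =>
      intro L hL
      refine SC.canon hL (L₀ := Γ.toList ++ [.and A B]) (Multiset.snoc1 Γ _) ?_
      simp only [ctx_append, ctx_cons, ctx_nil]
      exact SC.andL (by simpa using ih (Γ.toList ++ [A, B]) (Multiset.snoc2 Γ _ _))
  | orR₁ _ ih => exact fun L hL => SC.orR₁ (ih L hL)
  | orR₂ _ ih => exact fun L hL => SC.orR₂ (ih L hL)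
  | @orL Γ A B C _ _ ih1 ih2 =>
      intro L hL
      refine SC.canon hL (L₀ := Γ.toList ++ [.or A B]) (Multiset.snoc1 Γ _) ?_
      simp only [ctx_append, ctx_cons, ctx_nil]
      exact SC.orL (by simpa using ih1 (Γ.toList ++ [A]) (Multiset.snoc1 Γ _))
        (by simpa using ih2 (Γ.toList ++ [B]) (Multiset.snoc1 Γ _))
  | @impR Γ A B _ ih =>
      intro L hL
      exact SC.ruleImpR (by simpa using ih (L ++ [A]) (Multiset.snocL L _ hL A))
  | @impL Γ A B C _ _ ih1 ih2 =>
      intro L hL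
      refine SC.canon hL (L₀ := Γ.toList ++ [.imp A B]) (Multiset.snoc1 Γ _) ?_
      simp only [ctx_append, ctx_cons, ctx_nil]
      exact SC.impLeft (by simpa using ih1 (Γ.toList ++ [Formula.imp A B]) (Multiset.snoc1 Γ _))
        (by simpa using ih2 (Γ.toList ++ [B]) (Multiset.snoc1 Γ _))
  | snotSnotR _ ih => exact fun L hL => SC.ruleSnotSnotR (ih L hL)
  | @snotSnotL Γ A C _ ih =>
      intro L hL
      refine SC.canon hL (L₀ := Γ.toList ++ [.snot (.snot A)]) (Multiset.snoc1 Γ _) ?_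
      simp only [ctx_append, ctx_cons, ctx_nil]
      exact SC.ruleSnotSnotL (by simpa using ih (Γ.toList ++ [A]) (Multiset.snoc1 Γ _))
  | snotAndR₁ _ ih => exact fun L hL => SC.ruleSnotAndR1 (ih L hL)
  | snotAndR₂ _ ih => exact fun L hL => SC.ruleSnotAndR2 (ih L hL)
  | @snotAndL Γ A B C _ _ ih1 ih2 =>
      intro L hL
      refine SC.canon hL (L₀ := Γ.toList ++ [.snot (.and A B)]) (Multiset.snoc1 Γ _) ?_
      simp only [ctx_append, ctx_cons, ctx_nil]
      exact SC.ruleSnotAndL (by simpa using ih1 (Γ.toList ++ [Formula.snot A]) (Multiset.snoc1 Γ _))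
        (by simpa using ih2 (Γ.toList ++ [Formula.snot B]) (Multiset.snoc1 Γ _))
  | snotOrR _ _ ih1 ih2 => exact fun L hL => SC.ruleSnotOrR (ih1 L hL) (ih2 L hL)
  | @snotOrL Γ A B C _ ih =>
      intro L hL
      refine SC.canon hL (L₀ := Γ.toList ++ [.snot (.or A B)]) (Multiset.snoc1 Γ _) ?_
      simp only [ctx_append, ctx_cons, ctx_nil]
      exact SC.ruleSnotOrL (by simpa using ih (Γ.toList ++ [Formula.snot A, Formula.snot B]) (Multiset.snoc2 Γ _ _))
  | @snotImpR Γ A B _ ih =>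
      intro L hL
      exact SC.ruleSnotImpR (by simpa using ih (L ++ [A]) (Multiset.snocL L _ hL A))
  | @snotImpL Γ A B C _ _ ih1 ih2 =>
      intro L hL
      refine SC.canon hL (L₀ := Γ.toList ++ [.snot (.imp A B)]) (Multiset.snoc1 Γ _) ?_
      simp only [ctx_append, ctx_cons, ctx_nil]
      exact SC.snotImpLeft (by simpa using ih1 (Γ.toList ++ [Formula.snot (.imp A B)]) (Multiset.snoc1 Γ _))
        (by simpa using ih2 (Γ.toList ++ [Formula.snot B]) (Multiset.snoc1 Γ _))

/-- Every rule of `G3C` is derivable in `SC∞` (premise sequents, read as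
R-expressions of degree 1, derivable implies the conclusion derivable), and
consequently every sequent `Γ ⇒ A` derivable in `G3C` is derivable in `SC∞`. -/
theorem G3C_rules_derivable_in_SCinfty :
    -- axiom Γ, p ⇒ p
    (∀ (Γ : List Formula) (n : Nat), SC ∅ (.seq (ctx Γ ++ [.fm (.var n)]) (.fm (.var n)))) ∧
    -- axiom Γ, ∼p ⇒ ∼p
    (∀ (Γ : List Formula) (n : Nat),
      SC ∅ (.seq (ctx Γ ++ [.fm (.snot (.var n))]) (.fm (.snot (.var n))))) ∧
    -- R∧
    (∀ (Γ : List Formula) (A B : Formula), SC ∅ (.seq (ctx Γ) (.fm A)) →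
      SC ∅ (.seq (ctx Γ) (.fm B)) → SC ∅ (.seq (ctx Γ) (.fm (.and A B)))) ∧
    -- L∧
    (∀ (Γ : List Formula) (A B C : Formula),
      SC ∅ (.seq (ctx Γ ++ [.fm A, .fm B]) (.fm C)) →
      SC ∅ (.seq (ctx Γ ++ [.fm (.and A B)]) (.fm C))) ∧
    -- R∨ (both forms)
    (∀ (Γ : List Formula) (A B : Formula), SC ∅ (.seq (ctx Γ) (.fm A)) →
      SC ∅ (.seq (ctx Γ) (.fm (.or A B)))) ∧
    (∀ (Γ : List Formula) (A B : Formula), SC ∅ (.seq (ctx Γ) (.fm B)) →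
      SC ∅ (.seq (ctx Γ) (.fm (.or A B)))) ∧
    -- L∨
    (∀ (Γ : List Formula) (A B C : Formula),
      SC ∅ (.seq (ctx Γ ++ [.fm A]) (.fm C)) → SC ∅ (.seq (ctx Γ ++ [.fm B]) (.fm C)) →
      SC ∅ (.seq (ctx Γ ++ [.fm (.or A B)]) (.fm C))) ∧
    -- R→
    (∀ (Γ : List Formula) (A B : Formula), SC ∅ (.seq (ctx Γ ++ [.fm A]) (.fm B)) →
      SC ∅ (.seq (ctx Γ) (.fm (.imp A B)))) ∧
    -- L→
    (∀ (Γ : List Formula) (A B C : Formula),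
      SC ∅ (.seq (ctx Γ ++ [.fm (.imp A B)]) (.fm A)) →
      SC ∅ (.seq (ctx Γ ++ [.fm B]) (.fm C)) →
      SC ∅ (.seq (ctx Γ ++ [.fm (.imp A B)]) (.fm C))) ∧
    -- R∼∼
    (∀ (Γ : List Formula) (A : Formula), SC ∅ (.seq (ctx Γ) (.fm A)) →
      SC ∅ (.seq (ctx Γ) (.fm (.snot (.snot A))))) ∧
    -- L∼∼
    (∀ (Γ : List Formula) (A C : Formula), SC ∅ (.seq (ctx Γ ++ [.fm A]) (.fm C)) →
      SC ∅ (.seq (ctx Γ ++ [.fm (.snot (.snot A))]) (.fm C))) ∧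
    -- R∼∧ (both forms)
    (∀ (Γ : List Formula) (A B : Formula), SC ∅ (.seq (ctx Γ) (.fm (.snot A))) →
      SC ∅ (.seq (ctx Γ) (.fm (.snot (.and A B))))) ∧
    (∀ (Γ : List Formula) (A B : Formula), SC ∅ (.seq (ctx Γ) (.fm (.snot B))) →
      SC ∅ (.seq (ctx Γ) (.fm (.snot (.and A B))))) ∧
    -- L∼∧
    (∀ (Γ : List Formula) (A B C : Formula),
      SC ∅ (.seq (ctx Γ ++ [.fm (.snot A)]) (.fm C)) →
      SC ∅ (.seq (ctx Γ ++ [.fm (.snot B)]) (.fm C)) →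
      SC ∅ (.seq (ctx Γ ++ [.fm (.snot (.and A B))]) (.fm C))) ∧
    -- R∼∨
    (∀ (Γ : List Formula) (A B : Formula), SC ∅ (.seq (ctx Γ) (.fm (.snot A))) →
      SC ∅ (.seq (ctx Γ) (.fm (.snot B))) →
      SC ∅ (.seq (ctx Γ) (.fm (.snot (.or A B))))) ∧
    -- L∼∨
    (∀ (Γ : List Formula) (A B C : Formula),
      SC ∅ (.seq (ctx Γ ++ [.fm (.snot A), .fm (.snot B)]) (.fm C)) →
      SC ∅ (.seq (ctx Γ ++ [.fm (.snot (.or A B))]) (.fm C))) ∧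
    -- R∼→
    (∀ (Γ : List Formula) (A B : Formula),
      SC ∅ (.seq (ctx Γ ++ [.fm A]) (.fm (.snot B))) →
      SC ∅ (.seq (ctx Γ) (.fm (.snot (.imp A B))))) ∧
    -- L∼→
    (∀ (Γ : List Formula) (A B C : Formula),
      SC ∅ (.seq (ctx Γ ++ [.fm (.snot (.imp A B))]) (.fm A)) →
      SC ∅ (.seq (ctx Γ ++ [.fm (.snot B)]) (.fm C)) →
      SC ∅ (.seq (ctx Γ ++ [.fm (.snot (.imp A B))]) (.fm C))) ∧
    -- Consequently: every G3C-derivable sequent is derivable in SC∞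
    (∀ (Γ : List Formula) (A : Formula), Gder (↑Γ) A → SC ∅ (.seq (ctx Γ) (.fm A))) := by
  refine ⟨fun Γ n => SC.idCtx _ _, fun Γ n => SC.idCtx _ _,
    fun Γ A B h1 h2 => SC.andR h1 h2,
    fun Γ A B C h => SC.andL h,
    fun Γ A B h => SC.orR₁ h, fun Γ A B h => SC.orR₂ h,
    fun Γ A B C h1 h2 => SC.orL h1 h2,
    fun Γ A B h => SC.ruleImpR h,
    fun Γ A B C h1 h2 => SC.impLeft h1 h2,
    fun Γ A h => SC.ruleSnotSnotR h,
    fun Γ A C h => SC.ruleSnotSnotL h,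
    fun Γ A B h => SC.ruleSnotAndR1 h, fun Γ A B h => SC.ruleSnotAndR2 h,
    fun Γ A B C h1 h2 => SC.ruleSnotAndL h1 h2,
    fun Γ A B h1 h2 => SC.ruleSnotOrR h1 h2,
    fun Γ A B C h => SC.ruleSnotOrL h,
    fun Γ A B h => SC.ruleSnotImpR h,
    fun Γ A B C h1 h2 => SC.snotImpLeft h1 h2,
    fun Γ A h => gder_sc h Γ rfl⟩
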